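/- arXiv:0912.0841 — 2 statements merged into one kernel-verified Lean document; each statement's English description precedes it below -/
import Mathlib

section
/- Let Ω ⊆ ℂⁿ be open, let φ : Ω → ℝ be of class C², and let f ∈ C_c^∞(Ω). Then Σ_{l=1}^{2n} ∫_Ω |∂_l f − (∂_l φ) f|² e^{−φ} dλ = Σ_{l=1}^{2n} ∫_Ω |∂_l f|² e^{−φ} dλ + ∫_Ω (Δφ) |f|² e^{−φ} dλ. -/
open MeasureTheory Complex Metric Filter
noncomputable section

/-- `ℂⁿ` with its Euclidean inner product and norm. -/
abbrev Cn (n : ℕ) := EuclideanSpace ℂ (Fin n)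

instance {n : ℕ} : MeasurableSpace (Cn n) :=
  MeasurableSpace.comap (WithLp.ofLp : Cn n → (Fin n → ℂ)) MeasurableSpace.pi

/-- Lebesgue measure on `ℂⁿ ≅ ℝ^{2n}`. -/
instance {n : ℕ} : MeasureSpace (Cn n) :=
  ⟨MeasureTheory.Measure.map (WithLp.toLp 2 : (Fin n → ℂ) → Cn n)
    (MeasureTheory.Measure.pi fun _ => volume)⟩

/-- The real coordinate direction indexed by `(j, b)`: the `x_j`-direction if `b = false`,
the `y_j`-direction if `b = true`. -/
def dir {n : ℕ} (l : Fin n × Bool) : Cn n :=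
  EuclideanSpace.single l.1 (if l.2 then Complex.I else 1)

/-- The real partial derivative `∂_l`, `l` ranging over the `2n` real coordinate
directions of `ℂⁿ`. -/
def pd {n : ℕ} {F : Type} [NormedAddCommGroup F] [NormedSpace ℝ F]
    (l : Fin n × Bool) (f : Cn n → F) (z : Cn n) : F :=
  fderiv ℝ f z (dir l)

/-- The real Laplacian `Δφ = Σ_l ∂_l ∂_l φ`. -/
def lap {n : ℕ} (φ : Cn n → ℝ) (z : Cn n) : ℝ :=
  ∑ l : Fin n × Bool, pd l (pd l φ) z

/-- `|∇φ|²`, the squared norm of the real gradient. -/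
def gradSq {n : ℕ} (φ : Cn n → ℝ) (z : Cn n) : ℝ :=
  ∑ l : Fin n × Bool, (pd l φ z)^2

/-- The Levi form `L_u(z;t) = ¼(D²u(z)(t,t) + D²u(z)(it,it))`. -/
def levi {n : ℕ} (u : Cn n → ℝ) (z t : Cn n) : ℝ :=
  (1/4) * (fderiv ℝ (fun w => fderiv ℝ u w t) z t
    + fderiv ℝ (fun w => fderiv ℝ u w (Complex.I • t)) z (Complex.I • t))

/-- The Wirtinger derivative `∂g/∂z_j = ½(∂g/∂x_j − i ∂g/∂y_j)` of a complex-valued function. -/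
def wz {n : ℕ} (j : Fin n) (g : Cn n → ℂ) (z : Cn n) : ℂ :=
  (1/2) * (pd (j, false) g z - Complex.I * pd (j, true) g z)

/-- The Wirtinger derivative `∂g/∂z̄_j = ½(∂g/∂x_j + i ∂g/∂y_j)` of a complex-valued function. -/
def wzbar {n : ℕ} (j : Fin n) (g : Cn n → ℂ) (z : Cn n) : ℂ :=
  (1/2) * (pd (j, false) g z + Complex.I * pd (j, true) g z)

/-- The Wirtinger derivative `∂φ/∂z_j` of a real-valued function. -/
def wzR {n : ℕ} (j : Fin n) (φ : Cn n → ℝ) (z : Cn n) : ℂ :=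
  (1/2) * (Complex.ofReal (pd (j, false) φ z) - Complex.I * Complex.ofReal (pd (j, true) φ z))

/-- The Wirtinger derivative `∂φ/∂z̄_j` of a real-valued function. -/
def wzbarR {n : ℕ} (j : Fin n) (φ : Cn n → ℝ) (z : Cn n) : ℂ :=
  (1/2) * (Complex.ofReal (pd (j, false) φ z) + Complex.I * Complex.ofReal (pd (j, true) φ z))

/-- The complex Hessian coefficient `∂²φ/∂z_j∂z̄_k`. -/
def hess {n : ℕ} (φ : Cn n → ℝ) (j k : Fin n) (z : Cn n) : ℂ :=
  wz j (fun w => wzbarR k φ w) z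

/-- `∂̄*_φ f = −Σ_j (∂f_j/∂z_j − (∂φ/∂z_j) f_j)` for a `(0,1)`-form `f = (f_1,…,f_n)`. -/
def dbarStar {n : ℕ} (φ : Cn n → ℝ) (f : Fin n → Cn n → ℂ) (z : Cn n) : ℂ :=
  -∑ j, (wz j (f j) z - wzR j φ z * f j z)

/-- `f ∈ C_c^∞(Ω)`: smooth, compactly supported, with support inside `Ω`. -/
def SmoothCompSupp {n : ℕ} (Ω : Set (Cn n)) (f : Cn n → ℂ) : Prop :=
  ContDiff ℝ (⊤ : ℕ∞) f ∧ HasCompactSupport f ∧ tsupport f ⊆ Ω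

/-! For a direction `v`, expanding the square gives pointwise on `Ω`
`|∂f − (∂φ) f|² e^{−φ} = |∂f|² e^{−φ} + (∂²φ) |f|² e^{−φ} − ∂(|f|² (∂φ) e^{−φ})`,
and the last term is the derivative of a compactly supported `C¹` function, so it integrates
to zero. Summing over the `2n` real coordinate directions gives the Laplacian. -/

open Function

theorem ContDiffOn.contDiff_of_tsupport_subset {𝕜 E G : Type*} [NontriviallyNormedField 𝕜]
    [NormedAddCommGroup E] [NormedSpace 𝕜 E] [NormedAddCommGroup G] [NormedSpace 𝕜 G]
    {n : WithTop ℕ∞} {g : E → G} {s : Set E} (hg : ContDiffOn 𝕜 n g s) (hs : IsOpen s)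
    (hgs : tsupport g ⊆ s) : ContDiff 𝕜 n g := by
  refine contDiff_iff_contDiffAt.2 fun x => ?_
  by_cases hx : x ∈ tsupport g
  · exact hg.contDiffAt (hs.mem_nhds (hgs hx))
  · exact contDiffAt_const.congr_of_eventuallyEq (notMem_tsupport_iff_eventuallyEq.mp hx)

theorem ContinuousOn.integrable_of_eq_zero_off_compact {X G : Type*} [TopologicalSpace X]
    [T2Space X] [MeasurableSpace X] [OpensMeasurableSpace X] {μ : Measure X}
    [IsFiniteMeasureOnCompacts μ] [NormedAddCommGroup G] {g : X → G} {Ω K : Set X}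
    (hg : ContinuousOn g Ω) (hΩ : IsOpen Ω) (hK : IsCompact K) (hKΩ : K ⊆ Ω)
    (hg0 : ∀ z ∉ K, g z = 0) : Integrable g μ := by
  have hgK : tsupport g ⊆ K := closure_minimal (support_subset_iff'.2 hg0) hK.isClosed
  exact (hg.continuous_of_tsupport_subset hΩ (hgK.trans hKΩ)).integrable_of_hasCompactSupport
    (HasCompactSupport.intro hK hg0)

variable {E F : Type*} [NormedAddCommGroup E] [NormedSpace ℝ E]
  [NormedAddCommGroup F] [InnerProductSpace ℝ F]

theorem integral_fderiv_apply_eq_zero {G : Type*} [NormedAddCommGroup G] [NormedSpace ℝ G]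
    [FiniteDimensional ℝ E] [MeasurableSpace E] [BorelSpace E] (μ : Measure E)
    [μ.IsAddHaarMeasure] {g : E → G} (hg : ContDiff ℝ 1 g) (hgc : HasCompactSupport g) (v : E) :
    ∫ x, fderiv ℝ g x v ∂μ = 0 := by
  have hg' : Continuous fun x => fderiv ℝ g x v :=
    (hg.continuous_fderiv one_ne_zero).clm_apply continuous_const
  have key := integral_smul_fderiv_eq_neg_fderiv_smul_of_integrable (μ := μ)
    (f := fun _ => (1 : ℝ)) (g := g) (v := v) (by simp)
    (by simpa using hg'.integrable_of_hasCompactSupport (hgc.fderiv_apply (𝕜 := ℝ) v))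
    (by simpa using hg.continuous.integrable_of_hasCompactSupport hgc)
    (fun x _ => differentiableAt_const _) (fun x _ => hg.differentiable one_ne_zero x)
  simpa using key

theorem norm_fderiv_sub_smul_sq_mul_exp_neg {f : E → F} {φ : E → ℝ} {v z : E}
    (hf : DifferentiableAt ℝ f z) (hφ : DifferentiableAt ℝ φ z)
    (hφ' : DifferentiableAt ℝ (fun w => fderiv ℝ φ w v) z) :
    ‖fderiv ℝ f z v - fderiv ℝ φ z v • f z‖ ^ 2 * Real.exp (-φ z)
      = ‖fderiv ℝ f z v‖ ^ 2 * Real.exp (-φ z)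
        + fderiv ℝ (fun w => fderiv ℝ φ w v) z v * ‖f z‖ ^ 2 * Real.exp (-φ z)
        - fderiv ℝ (fun w => ‖f w‖ ^ 2 * fderiv ℝ φ w v * Real.exp (-φ w)) z v := by
  have hD := (hf.hasFDerivAt.norm_sq.fun_mul hφ'.hasFDerivAt).fun_mul
    hφ.hasFDerivAt.fun_neg.exp
  rw [hD.fderiv]
  simp only [add_apply, smul_apply, ContinuousLinearMap.comp_apply, neg_apply,
    innerSL_apply_apply, smul_eq_mul, norm_sub_sq_real, inner_smul_right, norm_smul,
    Real.norm_eq_abs, mul_pow, sq_abs]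
  rw [real_inner_comm (f z)]
  ring

section Weighted

variable [MeasurableSpace E] [BorelSpace E] {μ : Measure E} {Ω : Set E} {φ : E → ℝ}

theorem integrable_fderiv_fderiv_mul_norm_sq_mul_exp_neg [IsFiniteMeasureOnCompacts μ]
    {G : Type*} [NormedAddCommGroup G] {f : E → G} (hΩ : IsOpen Ω) (hφ : ContDiffOn ℝ 2 φ Ω)
    (hf : Continuous f) (hfc : HasCompactSupport f) (hfΩ : tsupport f ⊆ Ω) (v : E) :
    Integrable (fun z => fderiv ℝ (fun w => fderiv ℝ φ w v) z v * ‖f z‖ ^ 2 * Real.exp (-φ z))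
      μ := by
  have hφ' : ContDiffOn ℝ 1 (fun w => fderiv ℝ φ w v) Ω :=
    (hφ.fderiv_of_isOpen hΩ (by norm_num)).clm_apply contDiffOn_const
  refine ContinuousOn.integrable_of_eq_zero_off_compact ?_ hΩ hfc hfΩ fun z hz => ?_
  · exact (((hφ'.continuousOn_fderiv_of_isOpen hΩ le_rfl).clm_apply continuousOn_const).mul
      (hf.norm.pow 2).continuousOn).mul (hφ.continuousOn.neg.rexp)
  · simp [image_eq_zero_of_notMem_tsupport hz]

theorem setIntegral_norm_fderiv_sub_smul_sq_mul_exp_neg [FiniteDimensional ℝ E]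
    [μ.IsAddHaarMeasure] {f : E → F} (hΩ : IsOpen Ω) (hφ : ContDiffOn ℝ 2 φ Ω)
    (hf : ContDiff ℝ 1 f) (hfc : HasCompactSupport f) (hfΩ : tsupport f ⊆ Ω) (v : E) :
    ∫ z in Ω, ‖fderiv ℝ f z v - fderiv ℝ φ z v • f z‖ ^ 2 * Real.exp (-φ z) ∂μ
      = (∫ z in Ω, ‖fderiv ℝ f z v‖ ^ 2 * Real.exp (-φ z) ∂μ)
        + ∫ z in Ω, fderiv ℝ (fun w => fderiv ℝ φ w v) z v * ‖f z‖ ^ 2 * Real.exp (-φ z) ∂μ := by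
  set h : E → ℝ := fun w => ‖f w‖ ^ 2 * fderiv ℝ φ w v * Real.exp (-φ w) with h_def
  have hφ' : ContDiffOn ℝ 1 (fun w => fderiv ℝ φ w v) Ω :=
    (hφ.fderiv_of_isOpen hΩ (by norm_num)).clm_apply contDiffOn_const
  have hh0 : ∀ z ∉ tsupport f, h z = 0 := fun z hz => by
    simp [h_def, image_eq_zero_of_notMem_tsupport hz]
  have hhf : tsupport h ⊆ tsupport f :=
    closure_minimal (support_subset_iff'.2 hh0) (isClosed_tsupport f)
  have hh : ContDiff ℝ 1 h :=
    (((hf.norm_sq ℝ).contDiffOn.mul hφ').mul (hφ.of_le one_le_two).neg.exp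
      ).contDiff_of_tsupport_subset hΩ (hhf.trans hfΩ)
  have hA : Integrable (fun z => ‖fderiv ℝ f z v‖ ^ 2 * Real.exp (-φ z)) μ := by
    refine ContinuousOn.integrable_of_eq_zero_off_compact ?_ hΩ hfc hfΩ fun z hz => ?_
    · exact (((hf.continuous_fderiv one_ne_zero).clm_apply continuous_const).norm.pow 2
        ).continuousOn.mul hφ.continuousOn.neg.rexp
    · simp [fderiv_of_notMem_tsupport ℝ hz]
  have hB := integrable_fderiv_fderiv_mul_norm_sq_mul_exp_neg (μ := μ) hΩ hφ hf.continuous hfc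
    hfΩ v
  have hD : Integrable (fun z => fderiv ℝ h z v) μ :=
    ContinuousOn.integrable_of_eq_zero_off_compact
      ((hh.continuous_fderiv one_ne_zero).clm_apply continuous_const).continuousOn hΩ hfc hfΩ
      fun z hz => by simp [fderiv_of_notMem_tsupport ℝ (fun hzh => hz (hhf hzh))]
  calc _ = ∫ z in Ω, (‖fderiv ℝ f z v‖ ^ 2 * Real.exp (-φ z)
          + fderiv ℝ (fun w => fderiv ℝ φ w v) z v * ‖f z‖ ^ 2 * Real.exp (-φ z)
          - fderiv ℝ h z v) ∂μ :=
        setIntegral_congr_fun hΩ.measurableSet fun z hz =>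
          norm_fderiv_sub_smul_sq_mul_exp_neg (hf.differentiable one_ne_zero z)
            ((hφ.differentiableOn (by norm_num)).differentiableAt (hΩ.mem_nhds hz))
            ((hφ'.differentiableOn one_ne_zero).differentiableAt (hΩ.mem_nhds hz))
    _ = (∫ z in Ω, ‖fderiv ℝ f z v‖ ^ 2 * Real.exp (-φ z) ∂μ)
          + (∫ z in Ω, fderiv ℝ (fun w => fderiv ℝ φ w v) z v * ‖f z‖ ^ 2
              * Real.exp (-φ z) ∂μ)
          - ∫ z in Ω, fderiv ℝ h z v ∂μ := by
      rw [integral_sub _ hD.integrableOn, integral_add hA.integrableOn hB.integrableOn]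
      exact (hA.add hB).integrableOn
    _ = _ := by
      rw [setIntegral_eq_integral_of_forall_compl_eq_zero (f := fun z => fderiv ℝ h z v)
          fun z hz => ?_,
        integral_fderiv_apply_eq_zero μ hh (hfc.mono' (support_subset_iff'.2 hh0)) v, sub_zero]
      exact ContinuousLinearMap.ext_iff.mp
        (fderiv_of_notMem_tsupport ℝ fun hzh => hz (hfΩ (hhf hzh))) v

end Weighted

instance {n : ℕ} : BorelSpace (Cn n) :=
  ⟨(PiLp.borelSpace 2 (X := fun _ : Fin n => ℂ)).measurable_eq⟩

instance {n : ℕ} : (volume : Measure (Cn n)).IsAddHaarMeasure :=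
  (PiLp.continuousLinearEquiv 2 ℂ (fun _ : Fin n => ℂ)).symm.isAddHaarMeasure_map
    (Measure.pi fun _ : Fin n => (volume : Measure ℂ))

/-- the weighted integration-by-parts identity
`Σ_l ∫ |∂_l f − (∂_l φ) f|² e^{−φ} = Σ_l ∫ |∂_l f|² e^{−φ} + ∫ (Δφ)|f|² e^{−φ}`. -/
theorem stmt0 {n : ℕ} (Ω : Set (Cn n)) (hΩ : IsOpen Ω)
    (φ : Cn n → ℝ) (hφ : ContDiffOn ℝ 2 φ Ω)
    (f : Cn n → ℂ) (hf : SmoothCompSupp Ω f) :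
    ∑ l : Fin n × Bool,
        ∫ z in Ω, ‖pd l f z - Complex.ofReal (pd l φ z) * f z‖^2 * Real.exp (-φ z)
      = (∑ l : Fin n × Bool, ∫ z in Ω, ‖pd l f z‖^2 * Real.exp (-φ z))
        + ∫ z in Ω, lap φ z * ‖f z‖^2 * Real.exp (-φ z) := by
  obtain ⟨hf_smooth, hfc, hfΩ⟩ := hf
  have hf1 : ContDiff ℝ 1 f := hf_smooth.of_le (by exact_mod_cast le_top)
  have hlap : ∫ z in Ω, lap φ z * ‖f z‖^2 * Real.exp (-φ z)
      = ∑ l : Fin n × Bool, ∫ z in Ω, pd l (pd l φ) z * ‖f z‖^2 * Real.exp (-φ z) := by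
    simp only [lap, Finset.sum_mul]
    exact integral_finsetSum _ fun l _ => (integrable_fderiv_fderiv_mul_norm_sq_mul_exp_neg
      hΩ hφ hf1.continuous hfc hfΩ (dir l)).integrableOn
  simp only [← Complex.real_smul]
  rw [hlap, ← Finset.sum_add_distrib]
  exact Finset.sum_congr rfl fun l _ =>
    setIntegral_norm_fderiv_sub_smul_sq_mul_exp_neg hΩ hφ hf1 hfc hfΩ (dir l)
end
end

section
/- Let H be a complex Hilbert space and let N : H → H be a compact, self-adjoint, injective bounded linear operator which is positive in the sense that ⟨Nx, x⟩ ≥ 0 for all x ∈ H. If (u_k) is a sequence in H such that ‖N u_k‖ = 1 for all k and N u_k converges weakly to 0, then ⟨N u_k, u_k⟩ → +∞ as k → ∞. -/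
/-! With `y_k = N u_k`, Cauchy–Schwarz for the positive hermitian form `⟪N ·, ·⟫` gives
`1 = ⟪N u_k, y_k⟫² ≤ ⟪N u_k, u_k⟫ ⟪N y_k, y_k⟫ ≤ ⟪N u_k, u_k⟫ ‖N y_k‖`.
By self-adjointness `N y_k` is weakly null, and since it stays in the compact set
`closure (N '' closedBall 0 1)`, it tends to `0` in norm; hence `⟪N u_k, u_k⟫ → ∞`. -/

open Filter
noncomputable section

open Topology RCLike

theorem MapClusterPt.eq_of_tendsto {X Y : Type*} [TopologicalSpace X] [T2Space X] {l : Filter Y}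
    {f : Y → X} {x y : X} (h : MapClusterPt x l f) (hf : Tendsto f l (𝓝 y)) : x = y :=
  eq_of_nhds_neBot (h.neBot.mono (inf_le_inf_left _ hf))

theorem Filter.tendsto_atTop_of_one_le_mul {ι : Type*} {l : Filter ι} {f g : ι → ℝ}
    (hf : ∀ i, 0 ≤ f i) (hfg : ∀ i, 1 ≤ f i * g i) (hg : Tendsto g l (𝓝 0)) :
    Tendsto f l atTop := by
  have hg_pos : ∀ i, 0 < g i := fun i =>
    pos_of_mul_pos_right (one_pos.trans_le (hfg i)) (hf i)
  have hg_inv : Tendsto (fun i => (g i)⁻¹) l atTop :=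
    Tendsto.inv_tendsto_nhdsGT_zero
      (tendsto_nhdsWithin_of_tendsto_nhds_of_eventually_within _ hg (.of_forall hg_pos))
  refine tendsto_atTop_mono (fun i => ?_) hg_inv
  rw [inv_le_iff_one_le_mul₀ (hg_pos i)]
  exact hfg i

section InnerProduct

variable {𝕜 E : Type*} [RCLike 𝕜] [NormedAddCommGroup E] [InnerProductSpace 𝕜 E]

local notation "⟪" x ", " y "⟫" => inner 𝕜 x y

theorem IsCompact.tendsto_nhds_of_tendsto_inner {ι : Type*} {l : Filter ι} {K : Set E}
    (hK : IsCompact K) {z : ι → E} (hzK : ∀ i, z i ∈ K) {a : E}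
    (hz : ∀ v, Tendsto (fun i => ⟪z i, v⟫) l (𝓝 ⟪a, v⟫)) : Tendsto z l (𝓝 a) := by
  refine hK.tendsto_nhds_of_unique_mapClusterPt (.of_forall hzK) fun b _ hb => ?_
  refine ext_inner_right 𝕜 fun v => ?_
  exact (hb.tendsto_comp (continuous_id.inner continuous_const).continuousAt).eq_of_tendsto (hz v)

theorem IsCompactOperator.tendsto_nhds_of_tendsto_inner {F : Type*} [NormedAddCommGroup F]
    [NormedSpace 𝕜 F] {T : F →L[𝕜] E} (hT : IsCompactOperator T) {ι : Type*} {l : Filter ι}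
    {x : ι → F} {C : ℝ} (hx : ∀ i, ‖x i‖ ≤ C) {a : E}
    (hTx : ∀ v, Tendsto (fun i => ⟪T (x i), v⟫) l (𝓝 ⟪a, v⟫)) :
    Tendsto (fun i => T (x i)) l (𝓝 a) :=
  (hT.isCompact_closure_image_closedBall C).tendsto_nhds_of_tendsto_inner
    (fun i => subset_closure ⟨x i, by simpa using hx i, rfl⟩) hTx

abbrev LinearMap.IsPositive.preInnerProductSpaceCore {T : E →ₗ[𝕜] E} (hT : T.IsPositive) :
    PreInnerProductSpace.Core 𝕜 E where
  inner x y := ⟪T x, y⟫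
  conj_inner_symm x y := by simp only [inner_conj_symm, hT.isSymmetric x y]
  re_inner_nonneg := hT.re_inner_nonneg_left
  add_left x y z := by simp only [map_add, inner_add_left]
  smul_left x y r := by simp only [map_smul, inner_smul_left]

theorem LinearMap.IsPositive.norm_inner_sq_le {T : E →ₗ[𝕜] E} (hT : T.IsPositive) (x y : E) :
    ‖⟪T x, y⟫‖ ^ 2 ≤ re ⟪T x, x⟫ * re ⟪T y, y⟫ := by
  have hsymm : ‖⟪T y, x⟫‖ = ‖⟪T x, y⟫‖ := by
    rw [hT.isSymmetric y x, norm_inner_symm]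
  have h := @InnerProductSpace.Core.inner_mul_inner_self_le 𝕜 E _ _ _
    hT.preInnerProductSpaceCore x y
  change ‖⟪T x, y⟫‖ * ‖⟪T y, x⟫‖ ≤ re ⟪T x, x⟫ * re ⟪T y, y⟫ at h
  rwa [hsymm, ← sq] at h

theorem LinearMap.IsPositive.norm_pow_four_le {T : E →ₗ[𝕜] E} (hT : T.IsPositive) (x : E) :
    ‖T x‖ ^ 4 ≤ re ⟪T x, x⟫ * (‖T (T x)‖ * ‖T x‖) :=
  calc ‖T x‖ ^ 4 = ‖⟪T x, T x⟫‖ ^ 2 := by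
        rw [inner_self_eq_norm_sq_to_K, norm_pow, norm_algebraMap', norm_norm]; ring
    _ ≤ re ⟪T x, x⟫ * re ⟪T (T x), T x⟫ := hT.norm_inner_sq_le x (T x)
    _ ≤ re ⟪T x, x⟫ * (‖T (T x)‖ * ‖T x‖) :=
      mul_le_mul_of_nonneg_left ((re_le_norm _).trans (norm_inner_le_norm _ _))
        (hT.re_inner_nonneg_left x)

end InnerProduct

theorem stmt10_general {H : Type} [NormedAddCommGroup H] [InnerProductSpace ℂ H]
    (N : H →L[ℂ] H)
    (hcomp : IsCompactOperator N)
    (hsa : ∀ x y : H, (inner ℂ (N x) y : ℂ) = inner ℂ x (N y))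
    (hpos : ∀ x : H, 0 ≤ (inner ℂ (N x) x : ℂ).re)
    (u : ℕ → H)
    (hnorm : ∀ k, ‖N (u k)‖ = 1)
    (hweak : ∀ v : H, Tendsto (fun k => (inner ℂ (N (u k)) v : ℂ)) atTop (nhds 0)) :
    Tendsto (fun k => (inner ℂ (N (u k)) (u k) : ℂ).re) atTop atTop := by
  have hN : (N : H →ₗ[ℂ] H).IsPositive := ⟨hsa, hpos⟩
  have hNN : Tendsto (fun k => N (N (u k))) atTop (𝓝 0) :=
    hcomp.tendsto_nhds_of_tendsto_inner (fun k => (hnorm k).le) fun v => by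
      simpa only [hsa, inner_zero_left] using hweak (N v)
  refine tendsto_atTop_of_one_le_mul (fun k => hpos (u k)) (fun k => ?_) (by simpa using hNN.norm)
  simpa [hnorm k] using hN.norm_pow_four_le (u k)

/-- if `N` is a compact, self-adjoint, injective, positive operator on a complex
Hilbert space and `(u_k)` satisfies `‖N u_k‖ = 1` with `N u_k ⇀ 0` weakly, then
`⟨N u_k, u_k⟩ → +∞`. -/
theorem stmt10 {H : Type} [NormedAddCommGroup H] [InnerProductSpace ℂ H] [CompleteSpace H]
    (N : H →L[ℂ] H)
    (hcomp : IsCompactOperator N)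
    (hsa : ∀ x y : H, (inner ℂ (N x) y : ℂ) = inner ℂ x (N y))
    (hinj : Function.Injective N)
    (hpos : ∀ x : H, 0 ≤ (inner ℂ (N x) x : ℂ).re)
    (u : ℕ → H)
    (hnorm : ∀ k, ‖N (u k)‖ = 1)
    (hweak : ∀ v : H, Tendsto (fun k => (inner ℂ (N (u k)) v : ℂ)) atTop (nhds 0)) :
    Tendsto (fun k => (inner ℂ (N (u k)) (u k) : ℂ).re) atTop atTop :=
  stmt10_general N hcomp hsa hpos u hnorm hweak
end
end
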